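/- Fix θ ∈ (-π/2, 0) ∪ (0, π/2). For all twice continuously differentiable φ, ψ : ℝ² → ℂ, the carré du champ identity holds pointwise: (1/(2cosθ))·[L̃_θ(φ·conj(ψ)) − φ·L̃_θ(conj(ψ)) − conj(ψ)·L̃_θ(φ)] = 2·[∂φ/∂z · conj(∂ψ/∂z) + ∂φ/∂z̄ · conj(∂ψ/∂z̄)]. In particular, taking ψ = φ yields (1/(2cosθ))·[L̃_θ(|φ|²) − φ·L̃_θ(conj(φ)) − conj(φ)·L̃_θ(φ)] = 2(|∂φ/∂z|² + |∂φ/∂z̄|²) ≥ 0. -/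

import Mathlib

open MeasureTheory Complex Filter Finset
open scoped Real ComplexConjugate

/-- Wirtinger derivative `∂f/∂z = (1/2)(∂f/∂x - i ∂f/∂y)`. -/
noncomputable def dz (f : ℂ → ℂ) (z : ℂ) : ℂ :=
  (1 / 2 : ℂ) * (fderiv ℝ f z 1 - Complex.I * fderiv ℝ f z Complex.I)

/-- Wirtinger derivative `∂f/∂z̄ = (1/2)(∂f/∂x + i ∂f/∂y)`. -/
noncomputable def dzbar (f : ℂ → ℂ) (z : ℂ) : ℂ :=
  (1 / 2 : ℂ) * (fderiv ℝ f z 1 + Complex.I * fderiv ℝ f z Complex.I)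

/-- The complex Ornstein–Uhlenbeck operator
`L̃_θ f = 4cosθ ∂²f/∂z∂z̄ - e^{iθ} z ∂f/∂z - e^{-iθ} z̄ ∂f/∂z̄`. -/
noncomputable def LOU (θ : ℝ) (f : ℂ → ℂ) (z : ℂ) : ℂ :=
  4 * (Real.cos θ : ℂ) * dz (fun w => dzbar f w) z
    - Complex.exp (θ * Complex.I) * z * dz f z
    - Complex.exp (-θ * Complex.I) * (conj z) * dzbar f z

lemma dz_add' (f g : ℂ → ℂ) (z : ℂ) (hf : DifferentiableAt ℝ f z)
    (hg : DifferentiableAt ℝ g z) :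
    dz (fun w => f w + g w) z = dz f z + dz g z := by
  simp only [dz, fderiv_fun_add hf hg, ContinuousLinearMap.add_apply]
  ring

lemma dz_mul' (f g : ℂ → ℂ) (z : ℂ) (hf : DifferentiableAt ℝ f z)
    (hg : DifferentiableAt ℝ g z) :
    dz (fun w => f w * g w) z = dz f z * g z + f z * dz g z := by
  simp only [dz, fderiv_fun_mul hf hg, ContinuousLinearMap.add_apply,
    ContinuousLinearMap.smul_apply, smul_eq_mul]
  ring

lemma dzbar_mul' (f g : ℂ → ℂ) (z : ℂ) (hf : DifferentiableAt ℝ f z)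
    (hg : DifferentiableAt ℝ g z) :
    dzbar (fun w => f w * g w) z = dzbar f z * g z + f z * dzbar g z := by
  simp only [dzbar, fderiv_fun_mul hf hg, ContinuousLinearMap.add_apply,
    ContinuousLinearMap.smul_apply, smul_eq_mul]
  ring

lemma fderiv_conj' (f : ℂ → ℂ) (z : ℂ) (hf : DifferentiableAt ℝ f z) :
    fderiv ℝ (fun w => conj (f w)) z
      = Complex.conjCLE.toContinuousLinearMap.comp (fderiv ℝ f z) :=
  (Complex.conjCLE.toContinuousLinearMap.hasFDerivAt.comp z hf.hasFDerivAt).fderiv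

lemma dz_conj' (f : ℂ → ℂ) (z : ℂ) (hf : DifferentiableAt ℝ f z) :
    dz (fun w => conj (f w)) z = conj (dzbar f z) := by
  simp only [dz, dzbar, fderiv_conj' f z hf, ContinuousLinearMap.coe_comp',
    Function.comp_apply, ContinuousLinearEquiv.coe_coe, Complex.conjCLE_apply,
    map_mul, map_add, Complex.conj_I, map_div₀, map_one, map_ofNat]
  ring

lemma dzbar_conj' (f : ℂ → ℂ) (z : ℂ) (hf : DifferentiableAt ℝ f z) :
    dzbar (fun w => conj (f w)) z = conj (dz f z) := by
  simp only [dz, dzbar, fderiv_conj' f z hf, ContinuousLinearMap.coe_comp',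
    Function.comp_apply, ContinuousLinearEquiv.coe_coe, Complex.conjCLE_apply,
    map_mul, map_sub, Complex.conj_I, map_div₀, map_one, map_ofNat]
  ring

lemma dzbar_diff (f : ℂ → ℂ) (hf : ContDiff ℝ 2 f) (z : ℂ) :
    DifferentiableAt ℝ (fun w => dzbar f w) z := by
  have h1 : ContDiff ℝ 1 (fun w => fderiv ℝ f w 1) :=
    (hf.fderiv_right (le_refl _)).clm_apply contDiff_const
  have h2 : ContDiff ℝ 1 (fun w => fderiv ℝ f w Complex.I) :=
    (hf.fderiv_right (le_refl _)).clm_apply contDiff_const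
  have : ContDiff ℝ 1 (fun w => dzbar f w) := by
    unfold dzbar
    exact contDiff_const.mul (h1.add (contDiff_const.mul h2))
  exact (this.differentiable one_ne_zero) z

/-- Carré du champ identity for the complex Ornstein–Uhlenbeck operator, and its
non-negativity on the diagonal. -/
theorem carre_du_champ (θ : ℝ) (hθ : θ ∈ Set.Ioo (-(Real.pi / 2)) (Real.pi / 2))
    (hθ0 : θ ≠ 0) (φ ψ : ℂ → ℂ) (hφ : ContDiff ℝ 2 φ) (hψ : ContDiff ℝ 2 ψ) (z : ℂ) :
    (1 / (2 * (Real.cos θ : ℂ))) *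
        (LOU θ (fun w => φ w * conj (ψ w)) z
          - φ z * LOU θ (fun w => conj (ψ w)) z - conj (ψ z) * LOU θ φ z)
      = 2 * (dz φ z * conj (dz ψ z) + dzbar φ z * conj (dzbar ψ z))
    ∧ (1 / (2 * (Real.cos θ : ℂ))) *
        (LOU θ (fun w => φ w * conj (φ w)) z
          - φ z * LOU θ (fun w => conj (φ w)) z - conj (φ z) * LOU θ φ z)
      = 2 * (((‖dz φ z‖) ^ 2 : ℝ) + ((‖dzbar φ z‖) ^ 2 : ℝ)) := by
  have hcos : (Real.cos θ : ℂ) ≠ 0 := by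
    exact_mod_cast ne_of_gt (Real.cos_pos_of_mem_Ioo hθ)
  have main : ∀ g : ℂ → ℂ, ContDiff ℝ 2 g →
      (1 / (2 * (Real.cos θ : ℂ))) *
        (LOU θ (fun w => φ w * conj (g w)) z
          - φ z * LOU θ (fun w => conj (g w)) z - conj (g z) * LOU θ φ z)
      = 2 * (dz φ z * conj (dz g z) + dzbar φ z * conj (dzbar g z)) := by
    intro g hg
    set gc : ℂ → ℂ := fun w => conj (g w) with hgc
    have hg' : ContDiff ℝ 2 gc := Complex.conjCLE.toContinuousLinearMap.contDiff.comp hg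
    have hφd : ∀ w, DifferentiableAt ℝ φ w := fun w =>
      (hφ.differentiable (by norm_num)).differentiableAt
    have hgd : ∀ w, DifferentiableAt ℝ g w := fun w =>
      (hg.differentiable (by norm_num)).differentiableAt
    have hgcd : ∀ w, DifferentiableAt ℝ gc w := fun w =>
      (hg'.differentiable (by norm_num)).differentiableAt
    -- second order term
    have key : dz (fun w => dzbar (fun u => φ u * gc u) w) z
        = dz (fun w => dzbar φ w * gc w + φ w * dzbar gc w) z := by
      congr 1
      funext w
      exact dzbar_mul' φ gc w (hφd w) (hgcd w)
    have h2 : dz (fun w => dzbar φ w * gc w + φ w * dzbar gc w) z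
        = (dz (fun w => dzbar φ w) z * gc z + dzbar φ z * dz gc z)
          + (dz φ z * dzbar gc z + φ z * dz (fun w => dzbar gc w) z) := by
      rw [dz_add' (fun w => dzbar φ w * gc w) (fun w => φ w * dzbar gc w) z (((dzbar_diff φ hφ z)).mul (hgcd z)) ((hφd z).mul (dzbar_diff gc hg' z)),
        dz_mul' _ _ z (dzbar_diff φ hφ z) (hgcd z),
        dz_mul' _ _ z (hφd z) (dzbar_diff gc hg' z)]
    have hdzm : dz (fun w => φ w * gc w) z = dz φ z * gc z + φ z * dz gc z :=
      dz_mul' φ gc z (hφd z) (hgcd z)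
    have hdzbm : dzbar (fun w => φ w * gc w) z = dzbar φ z * gc z + φ z * dzbar gc z :=
      dzbar_mul' φ gc z (hφd z) (hgcd z)
    have hc1 : dz gc z = conj (dzbar g z) := dz_conj' g z (hgd z)
    have hc2 : dzbar gc z = conj (dz g z) := dzbar_conj' g z (hgd z)
    simp only [LOU] at *
    rw [key, h2, hdzm, hdzbm, hc1, hc2]
    have hcos' : Complex.cos (θ : ℂ) ≠ 0 := by rw [← Complex.ofReal_cos]; exact hcos
    field_simp
    ring
  refine ⟨main ψ hψ, ?_⟩
  have h := main φ hφ
  rw [h]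
  rw [← Complex.normSq_eq_norm_sq, ← Complex.normSq_eq_norm_sq, ← Complex.mul_conj, ← Complex.mul_conj]
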